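/- arXiv:1104.3841 — 2 statements merged into one kernel-verified Lean document; each statement's English description precedes it below -/
import Mathlib

section
/- If M = λ P_{S₁} − λ P_{S₂} + R with S₁ ⟂ S₂ nonzero orthogonal subspaces, R Hermitian with range orthogonal to S₁ ⊕ S₂ and ‖R‖ < λ, λ > 0, then ‖M‖ = λ, the eigenspace of M for λ is S₁ and the eigenspace for −λ is S₂. -/
open scoped ComplexOrder

noncomputable def opNorm {n : Type*} [Fintype n] [DecidableEq n] (M : Matrix n n ℂ) : ℝ :=
  ‖(Matrix.toEuclideanCLM (𝕜 := ℂ) M : EuclideanSpace ℂ n →L[ℂ] EuclideanSpace ℂ n)‖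

/-- `M` is minimal: its operator norm is ≤ that of `M + D` for every real diagonal `D`. -/
def IsMinimal {n : Type*} [Fintype n] [DecidableEq n] (M : Matrix n n ℂ) : Prop :=
  ∀ d : n → ℝ, opNorm M ≤ opNorm (M + Matrix.diagonal fun i => (d i : ℂ))

/-- `P` is the orthogonal projection matrix onto the subspace `S` of `ℂⁿ`
(with respect to the standard inner product). -/
def IsOrthProjOn {n : Type*} [Fintype n] [DecidableEq n]
    (P : Matrix n n ℂ) (S : Submodule ℂ (n → ℂ)) : Prop :=
  P.IsHermitian ∧ P * P = P ∧ LinearMap.range P.mulVecLin = S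

/-- Two subspaces of `ℂⁿ` are orthogonal for the standard inner product. -/
def OrthSubspaces {n : Type*} [Fintype n]
    (S₁ S₂ : Submodule ℂ (n → ℂ)) : Prop :=
  ∀ x ∈ S₁, ∀ y ∈ S₂, dotProduct (star x) y = 0

/-!
Pass to the operators `p₁, p₂, r` on `EuclideanSpace ℂ n`. Since `p₁ p₂ = 0` and `r` is killed by
`p₁, p₂` on both sides, every `x` splits orthogonally as `p₁ x + p₂ x + w` with
`M x = λ p₁ x - λ p₂ x + r w`, so `‖M x‖² = λ²‖p₁ x‖² + λ²‖p₂ x‖² + ‖r w‖² ≤ λ²‖x‖²`; the nonzero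
vectors of `S₁` are `λ`-eigenvectors, so `‖M‖ = λ`. If `M x = λ x`, applying `p₂` gives
`-λ p₂ x = λ p₂ x`, so `p₂ x = 0`, and then `w = x - p₁ x` satisfies `r w = λ w`, which forces
`w = 0` because `‖r‖ < λ`. The `-λ`-eigenspace of `M` is the `λ`-eigenspace of
`-M = λ p₂ - λ p₁ - r`, which has the same shape.
-/

open scoped Matrix

theorem IsSelfAdjoint.mul_eq_zero_swap {R : Type*} [NonUnitalNonAssocSemiring R] [StarRing R]
    {a b : R} (ha : IsSelfAdjoint a) (hb : IsSelfAdjoint b) (h : a * b = 0) : b * a = 0 := by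
  simpa [ha.star_eq, hb.star_eq] using congr_arg star h

section Operator

open ContinuousLinearMap

variable {𝕜 E : Type*} [RCLike 𝕜] [NormedAddCommGroup E] [InnerProductSpace 𝕜 E]

local notation "⟪" x ", " y "⟫" => inner 𝕜 x y

theorem ContinuousLinearMap.norm_le_norm_of_apply_eq_smul {T : E →L[𝕜] E} {x : E} {c : 𝕜}
    (hx : x ≠ 0) (h : T x = c • x) : ‖c‖ ≤ ‖T‖ := by
  have hle := T.le_opNorm x
  rw [h, norm_smul] at hle
  exact le_of_mul_le_mul_right hle (norm_pos_iff.2 hx)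

theorem ContinuousLinearMap.eq_zero_of_apply_eq_smul {T : E →L[𝕜] E} {x : E} {c : 𝕜}
    (hT : ‖T‖ < ‖c‖) (h : T x = c • x) : x = 0 := by
  by_contra hx
  exact (T.norm_le_norm_of_apply_eq_smul hx h).not_gt hT

theorem ContinuousLinearMap.apply_apply_eq_zero_of_mul_eq_zero {f g : E →L[𝕜] E} (h : f * g = 0)
    (x : E) : f (g x) = 0 := by
  rw [← mul_apply_eq_comp, h, zero_apply]

theorem ContinuousLinearMap.apply_apply_eq_self_of_isIdempotentElem {p : E →L[𝕜] E}
    (hp : IsIdempotentElem p) (x : E) : p (p x) = p x := by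
  rw [← mul_apply_eq_comp, hp.eq]

theorem norm_add_add_sq_of_inner_eq_zero {a b w : E} (hab : ⟪a, b⟫ = 0) (haw : ⟪a, w⟫ = 0)
    (hbw : ⟪b, w⟫ = 0) : ‖a + b + w‖ ^ 2 = ‖a‖ ^ 2 + ‖b‖ ^ 2 + ‖w‖ ^ 2 := by
  have habw : ⟪a + b, w⟫ = 0 := by rw [inner_add_left, haw, hbw, add_zero]
  simp only [sq, norm_add_sq_eq_norm_sq_add_norm_sq_of_inner_eq_zero _ _ habw,
    norm_add_sq_eq_norm_sq_add_norm_sq_of_inner_eq_zero _ _ hab]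

theorem IsSelfAdjoint.inner_apply_eq_zero [CompleteSpace E] {p : E →L[𝕜] E}
    (hp : IsSelfAdjoint p) {y : E} (hy : p y = 0) (x : E) : ⟪p x, y⟫ = 0 := by
  rw [← adjoint_inner_right, hp.adjoint_eq, hy, inner_zero_right]

theorem IsSelfAdjoint.mul_eq_zero_of_inner_eq_zero [CompleteSpace E] {p q : E →L[𝕜] E}
    (hp : IsSelfAdjoint p) (h : ∀ x y, ⟪p x, q y⟫ = 0) : p * q = 0 := by
  ext y
  refine ext_inner_left 𝕜 fun x => ?_
  rw [mul_apply_eq_comp, ← adjoint_inner_left, hp.adjoint_eq, h, zero_apply, inner_zero_right]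

variable {p₁ p₂ r : E →L[𝕜] E} {c : 𝕜}

theorem IsStarProjection.norm_sq_eq_of_mul_eq_zero [CompleteSpace E] (hp₁ : IsStarProjection p₁)
    (hp₂ : IsStarProjection p₂) (h₁₂ : p₁ * p₂ = 0) (x : E) :
    ‖x‖ ^ 2 = ‖p₁ x‖ ^ 2 + ‖p₂ x‖ ^ 2 + ‖x - p₁ x - p₂ x‖ ^ 2 := by
  have h₂₁ := hp₁.isSelfAdjoint.mul_eq_zero_swap hp₂.isSelfAdjoint h₁₂
  have hp₁w : p₁ (x - p₁ x - p₂ x) = 0 := by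
    rw [map_sub, map_sub, apply_apply_eq_self_of_isIdempotentElem hp₁.isIdempotentElem,
      apply_apply_eq_zero_of_mul_eq_zero h₁₂, sub_self, sub_zero]
  have hp₂w : p₂ (x - p₁ x - p₂ x) = 0 := by
    rw [map_sub, map_sub, apply_apply_eq_self_of_isIdempotentElem hp₂.isIdempotentElem,
      apply_apply_eq_zero_of_mul_eq_zero h₂₁, sub_zero, sub_self]
  calc ‖x‖ ^ 2 = ‖p₁ x + p₂ x + (x - p₁ x - p₂ x)‖ ^ 2 := by congr 2; abel
    _ = _ := norm_add_add_sq_of_inner_eq_zero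
      (hp₁.isSelfAdjoint.inner_apply_eq_zero (apply_apply_eq_zero_of_mul_eq_zero h₁₂ x) x)
      (hp₁.isSelfAdjoint.inner_apply_eq_zero hp₁w x) (hp₂.isSelfAdjoint.inner_apply_eq_zero hp₂w x)

theorem apply_eq_smul_iff (hp₂ : IsIdempotentElem p₂) (h₂₁ : p₂ * p₁ = 0) (hr₂ : p₂ * r = 0)
    (hr₁ : r * p₁ = 0) (hrc : ‖r‖ < ‖c‖) (x : E) :
    (c • p₁ - c • p₂ + r) x = c • x ↔ p₁ x = x := by
  have hc : c ≠ 0 := norm_pos_iff.1 ((norm_nonneg r).trans_lt hrc)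
  constructor
  · intro h
    have hp₂x : p₂ x = 0 := by
      have h₂ := congr(p₂ $h)
      rw [add_apply, sub_apply, smul_apply, smul_apply, map_add, map_sub, map_smul, map_smul,
        map_smul, apply_apply_eq_zero_of_mul_eq_zero h₂₁, apply_apply_eq_zero_of_mul_eq_zero hr₂,
        apply_apply_eq_self_of_isIdempotentElem hp₂, smul_zero, zero_sub, add_zero,
        neg_eq_iff_add_eq_zero, ← two_smul 𝕜, smul_smul] at h₂
      exact (smul_eq_zero.1 h₂).resolve_left (mul_ne_zero two_ne_zero hc)
    have hw : r (x - p₁ x) = c • (x - p₁ x) := by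
      rw [add_apply, sub_apply, smul_apply, smul_apply, hp₂x, smul_zero, sub_zero] at h
      rw [map_sub, apply_apply_eq_zero_of_mul_eq_zero hr₁, sub_zero, smul_sub, ← h,
        add_sub_cancel_left]
    exact (sub_eq_zero.1 (r.eq_zero_of_apply_eq_smul hrc hw)).symm
  · intro h
    have hp₂x : p₂ x = 0 := h ▸ apply_apply_eq_zero_of_mul_eq_zero h₂₁ x
    have hrx : r x = 0 := h ▸ apply_apply_eq_zero_of_mul_eq_zero hr₁ x
    simp [hp₂x, hrx, h]

theorem apply_eq_neg_smul_iff (hp₁ : IsIdempotentElem p₁) (h₁₂ : p₁ * p₂ = 0) (hr₁ : p₁ * r = 0)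
    (hr₂ : r * p₂ = 0) (hrc : ‖r‖ < ‖c‖) (x : E) :
    (c • p₁ - c • p₂ + r) x = -c • x ↔ p₂ x = x := by
  have hneg : (c • p₂ - c • p₁ + -r) x = -((c • p₁ - c • p₂ + r) x) := by
    simp only [add_apply, sub_apply, smul_apply, neg_apply]
    abel
  rw [← apply_eq_smul_iff hp₁ h₁₂ (by rw [mul_neg, hr₁, neg_zero]) (by rw [neg_mul, hr₂, neg_zero])
    (by rwa [norm_neg]) x, hneg, neg_eq_iff_eq_neg, neg_smul]

variable [CompleteSpace E]

theorem norm_smul_sub_smul_add_le (hp₁ : IsStarProjection p₁) (hp₂ : IsStarProjection p₂)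
    (h₁₂ : p₁ * p₂ = 0) (hr : IsSelfAdjoint r) (hr₁ : p₁ * r = 0) (hr₂ : p₂ * r = 0)
    (hrc : ‖r‖ ≤ ‖c‖) : ‖c • p₁ - c • p₂ + r‖ ≤ ‖c‖ := by
  refine opNorm_le_bound _ (norm_nonneg c) fun x => ?_
  set w := x - p₁ x - p₂ x with hw
  have hTx : (c • p₁ - c • p₂ + r) x = c • p₁ x + (-c) • p₂ x + r w := by
    rw [hw, map_sub, map_sub,
      apply_apply_eq_zero_of_mul_eq_zero (hp₁.isSelfAdjoint.mul_eq_zero_swap hr hr₁),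
      apply_apply_eq_zero_of_mul_eq_zero (hp₂.isSelfAdjoint.mul_eq_zero_swap hr hr₂),
      sub_zero, sub_zero, neg_smul, add_apply, sub_apply, smul_apply, smul_apply, sub_eq_add_neg]
  have o₁₂ := hp₁.isSelfAdjoint.inner_apply_eq_zero (apply_apply_eq_zero_of_mul_eq_zero h₁₂ x) x
  have o₁r := hp₁.isSelfAdjoint.inner_apply_eq_zero (apply_apply_eq_zero_of_mul_eq_zero hr₁ w) x
  have o₂r := hp₂.isSelfAdjoint.inner_apply_eq_zero (apply_apply_eq_zero_of_mul_eq_zero hr₂ w) x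
  have hTsq := norm_add_add_sq_of_inner_eq_zero (𝕜 := 𝕜) (a := c • p₁ x) (b := (-c) • p₂ x)
    (w := r w) (by simp [inner_smul_left, inner_smul_right, o₁₂]) (by simp [inner_smul_left, o₁r])
    (by simp [inner_smul_left, o₂r])
  rw [← hTx, norm_smul, norm_smul, norm_neg] at hTsq
  have hrw : ‖r w‖ ≤ ‖c‖ * ‖w‖ := (r.le_opNorm w).trans (by gcongr)
  refine le_of_pow_le_pow_left₀ two_ne_zero (by positivity) ?_
  rw [hTsq, mul_pow ‖c‖ ‖x‖, hp₁.norm_sq_eq_of_mul_eq_zero hp₂ h₁₂ x]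
  nlinarith [pow_le_pow_left₀ (norm_nonneg _) hrw 2]

theorem norm_smul_sub_smul_add_eq (hp₁ : IsStarProjection p₁) (hp₂ : IsStarProjection p₂)
    (h₁₂ : p₁ * p₂ = 0) (hr : IsSelfAdjoint r) (hr₁ : p₁ * r = 0) (hr₂ : p₂ * r = 0)
    (hrc : ‖r‖ < ‖c‖) (hp₁_ne : p₁ ≠ 0) : ‖c • p₁ - c • p₂ + r‖ = ‖c‖ := by
  refine (norm_smul_sub_smul_add_le hp₁ hp₂ h₁₂ hr hr₁ hr₂ hrc.le).antisymm ?_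
  obtain ⟨x, hx⟩ : ∃ x, p₁ x ≠ 0 := by
    by_contra! h
    exact hp₁_ne (ext h)
  refine norm_le_norm_of_apply_eq_smul hx <|
    (apply_eq_smul_iff hp₂.isIdempotentElem
      (hp₁.isSelfAdjoint.mul_eq_zero_swap hp₂.isSelfAdjoint h₁₂) hr₂
      (hp₁.isSelfAdjoint.mul_eq_zero_swap hr hr₁) hrc _).2 ?_
  exact apply_apply_eq_self_of_isIdempotentElem hp₁.isIdempotentElem x

end Operator

namespace Matrix

variable {n : Type*} [Fintype n] [DecidableEq n]

theorem toEuclideanCLM_toLp_eq_iff {A : Matrix n n ℂ} {v w : n → ℂ} :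
    toEuclideanCLM (𝕜 := ℂ) A (WithLp.toLp 2 v) = WithLp.toLp 2 w ↔ A *ᵥ v = w := by
  rw [toEuclideanCLM_toLp, (WithLp.toLp_injective 2).eq_iff]

theorem toEuclideanCLM_mul_eq_zero {A B : Matrix n n ℂ} (h : A * B = 0) :
    toEuclideanCLM (𝕜 := ℂ) A * toEuclideanCLM (𝕜 := ℂ) B = 0 := by
  rw [← map_mul, h, map_zero]

end Matrix

namespace IsOrthProjOn

variable {n : Type*} [Fintype n] [DecidableEq n] {P : Matrix n n ℂ} {S : Submodule ℂ (n → ℂ)}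

theorem mulVec_mem (h : IsOrthProjOn P S) (v : n → ℂ) : P *ᵥ v ∈ S :=
  h.2.2 ▸ ⟨v, rfl⟩

theorem mem_iff (h : IsOrthProjOn P S) {v : n → ℂ} : v ∈ S ↔ P *ᵥ v = v := by
  refine ⟨fun hv => ?_, fun hv => hv ▸ h.mulVec_mem v⟩
  obtain ⟨u, rfl⟩ := h.2.2 ▸ hv
  rw [Matrix.mulVecLin_apply, Matrix.mulVec_mulVec, h.2.1]

theorem isStarProjection_toEuclideanCLM (h : IsOrthProjOn P S) :
    IsStarProjection (Matrix.toEuclideanCLM (𝕜 := ℂ) P) :=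
  IsStarProjection.map ⟨h.2.1, h.1.isSelfAdjoint⟩ _

theorem toEuclideanCLM_ne_zero (h : IsOrthProjOn P S) (hS : S ≠ ⊥) :
    Matrix.toEuclideanCLM (𝕜 := ℂ) P ≠ 0 := by
  intro h0
  obtain rfl : P = 0 := (map_eq_zero_iff _ (EquivLike.injective _)).1 h0
  exact hS (by rw [← h.2.2, Matrix.mulVecLin_zero, LinearMap.range_zero])

end IsOrthProjOn

theorem OrthSubspaces.toEuclideanCLM_mul_eq_zero {n : Type*} [Fintype n] [DecidableEq n]
    {S₁ S₂ : Submodule ℂ (n → ℂ)} {P₁ P₂ : Matrix n n ℂ} (h : OrthSubspaces S₁ S₂)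
    (h₁ : IsOrthProjOn P₁ S₁) (h₂ : IsOrthProjOn P₂ S₂) :
    Matrix.toEuclideanCLM (𝕜 := ℂ) P₁ * Matrix.toEuclideanCLM (𝕜 := ℂ) P₂ = 0 := by
  refine h₁.isStarProjection_toEuclideanCLM.isSelfAdjoint.mul_eq_zero_of_inner_eq_zero
    fun x y => ?_
  rw [EuclideanSpace.inner_eq_star_dotProduct, Matrix.ofLp_toEuclideanCLM,
    Matrix.ofLp_toEuclideanCLM, dotProduct_comm]
  exact h _ (h₁.mulVec_mem _) _ (h₂.mulVec_mem _)

theorem stmt9_general {n : Type*} [Fintype n] [DecidableEq n]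
    (S₁ S₂ : Submodule ℂ (n → ℂ)) (horth : OrthSubspaces S₁ S₂)
    (hS₁ : S₁ ≠ ⊥)
    (lam : ℝ)
    (PS₁ PS₂ R : Matrix n n ℂ)
    (hPS₁ : IsOrthProjOn PS₁ S₁) (hPS₂ : IsOrthProjOn PS₂ S₂)
    (hR : R.IsHermitian) (hR₁ : PS₁ * R = 0) (hR₂ : PS₂ * R = 0)
    (hRnorm : opNorm R < lam) :
    opNorm ((lam : ℂ) • PS₁ - (lam : ℂ) • PS₂ + R) = lam ∧
    (∀ v : n → ℂ,
      ((lam : ℂ) • PS₁ - (lam : ℂ) • PS₂ + R).mulVec v = (lam : ℂ) • v ↔ v ∈ S₁) ∧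
    (∀ v : n → ℂ,
      ((lam : ℂ) • PS₁ - (lam : ℂ) • PS₂ + R).mulVec v = (-(lam : ℝ) : ℂ) • v ↔ v ∈ S₂) := by
  have hp₁ := hPS₁.isStarProjection_toEuclideanCLM
  have hp₂ := hPS₂.isStarProjection_toEuclideanCLM
  have h₁₂ := horth.toEuclideanCLM_mul_eq_zero hPS₁ hPS₂
  have hr := hR.isSelfAdjoint.map (Matrix.toEuclideanCLM (n := n) (𝕜 := ℂ))
  have hr₁ := Matrix.toEuclideanCLM_mul_eq_zero hR₁
  have hr₂ := Matrix.toEuclideanCLM_mul_eq_zero hR₂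
  have hlam : ‖(lam : ℂ)‖ = lam := Complex.norm_of_nonneg ((norm_nonneg _).trans hRnorm.le)
  have hrc : ‖Matrix.toEuclideanCLM (𝕜 := ℂ) R‖ < ‖(lam : ℂ)‖ := by rw [hlam]; exact hRnorm
  simp only [opNorm, ← Matrix.toEuclideanCLM_toLp_eq_iff, WithLp.toLp_smul, hPS₁.mem_iff,
    hPS₂.mem_iff, map_add, map_sub, map_smul]
  refine ⟨?_, fun v => ?_, fun v => ?_⟩
  · rw [norm_smul_sub_smul_add_eq hp₁ hp₂ h₁₂ hr hr₁ hr₂ hrc (hPS₁.toEuclideanCLM_ne_zero hS₁),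
      hlam]
  · exact apply_eq_smul_iff hp₂.isIdempotentElem
      (hp₁.isSelfAdjoint.mul_eq_zero_swap hp₂.isSelfAdjoint h₁₂) hr₂
      (hp₁.isSelfAdjoint.mul_eq_zero_swap hr hr₁) hrc _
  · exact apply_eq_neg_smul_iff hp₁.isIdempotentElem h₁₂ hr₁
      (hp₂.isSelfAdjoint.mul_eq_zero_swap hr hr₂) hrc _

theorem stmt9 {n : Type*} [Fintype n] [DecidableEq n]
    (S₁ S₂ : Submodule ℂ (n → ℂ)) (horth : OrthSubspaces S₁ S₂)
    (hS₁ : S₁ ≠ ⊥) (hS₂ : S₂ ≠ ⊥)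
    (lam : ℝ) (hlam : 0 < lam)
    (PS₁ PS₂ R : Matrix n n ℂ)
    (hPS₁ : IsOrthProjOn PS₁ S₁) (hPS₂ : IsOrthProjOn PS₂ S₂)
    (hR : R.IsHermitian) (hR₁ : PS₁ * R = 0) (hR₂ : PS₂ * R = 0)
    (hRnorm : opNorm R < lam) :
    opNorm ((lam : ℂ) • PS₁ - (lam : ℂ) • PS₂ + R) = lam ∧
    (∀ v : n → ℂ,
      ((lam : ℂ) • PS₁ - (lam : ℂ) • PS₂ + R).mulVec v = (lam : ℂ) • v ↔ v ∈ S₁) ∧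
    (∀ v : n → ℂ,
      ((lam : ℂ) • PS₁ - (lam : ℂ) • PS₂ + R).mulVec v = (-(lam : ℝ) : ℂ) • v ↔ v ∈ S₂) :=
  stmt9_general S₁ S₂ horth hS₁ lam PS₁ PS₂ R hPS₁ hPS₂ hR hR₁ hR₂ hRnorm
end

section
/- Let P be positive semidefinite with positive eigenvalues a₁,…,a_r. P has a companion if and only if there exist orthonormal eigenvectors v₁,…,v_r for a₁,…,a_r and orthonormal vectors v_{r+1},…,v_n spanning ker P such that Σ_{i=1}^r a_i (v_i ∘ v̄_i) lies in the convex cone generated by {v_j ∘ v̄_j : r+1 ≤ j ≤ n}. -/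
open scoped ComplexOrder

/-- The family `v` is orthonormal for the standard inner product of `ℂⁿ`. -/
def ONFamily {ι : Type*} [DecidableEq ι] {n : Type*} [Fintype n]
    (v : ι → (n → ℂ)) : Prop :=
  ∀ i j, dotProduct (star (v i)) (v j) = if i = j then (1 : ℂ) else 0

open Matrix

/-!
If `Q ⪰ 0` and `P Q = 0` then also `Q P = 0`, and every eigenvector `w` of the Hermitian matrix
`P - Q`, say with eigenvalue `t`, is a common eigenvector: `P w = max(t, 0) w` and
`Q w = max(-t, 0) w`. An orthonormal eigenbasis of `P - Q` thus diagonalises `P` and `Q`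
simultaneously; comparing ranks, exactly as many of its vectors lie outside `ker P` as there are
nonzero `aᵢ`. Keeping the `uᵢ` with `aᵢ ≠ 0` and using the remaining eigenvectors for the kernel
gives the required basis, and `diag P = diag Q` becomes the cone condition. Conversely
`Q = ∑ xⱼ vⱼ vⱼᴴ` is a companion.
-/

lemma Equiv.Perm.exists_forall_iff_of_card_eq {α : Type*} [Fintype α] {p q : α → Prop}
    [DecidablePred p] [DecidablePred q] (h : Fintype.card {a // p a} = Fintype.card {a // q a}) :
    ∃ τ : Equiv.Perm α, ∀ a, p a ↔ q (τ a) := by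
  have hc : Fintype.card {a // ¬p a} = Fintype.card {a // ¬q a} := by
    simp only [Fintype.card_subtype_compl, h]
  refine ⟨(Fintype.equivOfCardEq h).subtypeCongr (Fintype.equivOfCardEq hc), fun a => ?_⟩
  by_cases ha : p a
  · simpa [Equiv.subtypeCongr, ha] using ((Fintype.equivOfCardEq h) ⟨a, ha⟩).2
  · simpa [Equiv.subtypeCongr, ha] using ((Fintype.equivOfCardEq hc) ⟨a, ha⟩).2

namespace ONFamily

variable {ι n : Type*} [DecidableEq ι] [Fintype n] {v : ι → n → ℂ}

lemma comp (hv : ONFamily v) {κ : Type*} [DecidableEq κ] {f : κ → ι}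
    (hf : Function.Injective f) : ONFamily (v ∘ f) := by
  intro i j
  simp [hv (f i) (f j), hf.eq_iff]

lemma linearIndependent (hv : ONFamily v) : LinearIndependent ℂ v := by
  rw [linearIndependent_iff']
  intro s c hc j hj
  simpa [dotProduct_sum, dotProduct_smul, hv j, hj] using congrArg (star (v j) ⬝ᵥ ·) hc

lemma ite {u w : ι → n → ℂ} (hu : ONFamily u) (hw : ONFamily w) (p : ι → Prop)
    [DecidablePred p] (horth : ∀ i j, p i → ¬p j → star (u i) ⬝ᵥ w j = 0) :
    ONFamily (fun i => if p i then u i else w i) := by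
  intro i j
  by_cases hi : p i <;> by_cases hj : p j
  · simp [hi, hj, hu i j]
  · simp [hi, hj, horth i j hi hj, show i ≠ j by rintro rfl; exact hj hi]
  · simp [hi, hj, star_dotProduct, horth j i hj hi, show i ≠ j by rintro rfl; exact hi hj]
  · simp [hi, hj, hw i j]

end ONFamily

section SumVecMulVec

variable {ι n : Type*} [Fintype ι]

lemma sum_vecMulVec_apply_self (v : ι → n → ℂ) (c : ι → ℝ) (k : n) :
    (∑ i, (c i : ℂ) • vecMulVec (v i) (star (v i))) k k = ((∑ i, c i * ‖v i k‖ ^ 2 : ℝ) : ℂ) := by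
  simp [Matrix.sum_apply, vecMulVec_apply, Complex.mul_conj, Complex.normSq_eq_norm_sq]

variable [Fintype n]

lemma sum_vecMulVec_mulVec (v : ι → n → ℂ) (c : ι → ℂ) (x : n → ℂ) :
    (∑ i, c i • vecMulVec (v i) (star (v i))) *ᵥ x = ∑ i, (c i * (star (v i) ⬝ᵥ x)) • v i := by
  simp [sum_mulVec, smul_mulVec, vecMulVec_mulVec, smul_smul]

lemma posSemidef_sum_vecMulVec (v : ι → n → ℂ) {c : ι → ℝ} (hc : ∀ i, 0 ≤ c i) :
    (∑ i, (c i : ℂ) • vecMulVec (v i) (star (v i))).PosSemidef :=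
  posSemidef_sum _ fun i _ =>
    (posSemidef_vecMulVec_self_star (v i)).smul (Complex.zero_le_real.mpr (hc i))

variable [DecidableEq ι] {v : ι → n → ℂ}

lemma ONFamily.sum_vecMulVec_mulVec (hv : ONFamily v) (c : ι → ℂ) (j : ι) :
    (∑ i, c i • vecMulVec (v i) (star (v i))) *ᵥ v j = c j • v j := by
  simp [_root_.sum_vecMulVec_mulVec, hv _ j]

lemma ONFamily.rank_sum_vecMulVec (hv : ONFamily v) (c : ι → ℂ) :
    (∑ i, c i • vecMulVec (v i) (star (v i))).rank = Fintype.card {i // c i ≠ 0} := by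
  have hrange : LinearMap.range (∑ i, c i • vecMulVec (v i) (star (v i))).mulVecLin =
      Submodule.span ℂ (Set.range fun i : {i // c i ≠ 0} => v i) := by
    apply le_antisymm
    · rintro _ ⟨x, rfl⟩
      rw [mulVecLin_apply, _root_.sum_vecMulVec_mulVec]
      refine Submodule.sum_mem _ fun i _ => ?_
      by_cases hi : c i = 0
      · simp [hi]
      · exact Submodule.smul_mem _ _ (Submodule.subset_span ⟨⟨i, hi⟩, rfl⟩)
    · rw [Submodule.span_le]
      rintro _ ⟨⟨i, hi⟩, rfl⟩
      exact ⟨(c i)⁻¹ • v i, by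
        rw [mulVecLin_apply, mulVec_smul, hv.sum_vecMulVec_mulVec, smul_smul, inv_mul_cancel₀ hi,
          one_smul]⟩
  rw [Matrix.rank, hrange, finrank_span_eq_card]
  exact (hv.comp Subtype.val_injective).linearIndependent

end SumVecMulVec

section Spectral

variable {n : Type*} [Fintype n]

lemma Matrix.IsHermitian.star_dotProduct_eq_zero {A : Matrix n n ℂ} (hA : A.IsHermitian)
    {x y : n → ℂ} {c : ℝ} (hc : c ≠ 0) (hx : A *ᵥ x = (c : ℂ) • x) (hy : A *ᵥ y = 0) :
    star x ⬝ᵥ y = 0 := by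
  have h : star (A *ᵥ x) ⬝ᵥ y = 0 := by
    rw [star_mulVec, hA.eq, ← dotProduct_mulVec, hy, dotProduct_zero]
  simpa [hx, hc] using h

variable [DecidableEq n]

lemma ONFamily.span_eq_top {v : n → n → ℂ} (hv : ONFamily v) :
    Submodule.span ℂ (Set.range v) = ⊤ :=
  hv.linearIndependent.span_eq_top_of_card_eq_finrank' (Module.finrank_fintype_fun_eq_card ℂ).symm

lemma ONFamily.eq_sum_vecMulVec {v : n → n → ℂ} (hv : ONFamily v) {M : Matrix n n ℂ}
    {c : n → ℂ} (hM : ∀ i, M *ᵥ v i = c i • v i) :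
    M = ∑ i, c i • vecMulVec (v i) (star (v i)) :=
  Matrix.toLin'.injective <| LinearMap.ext_on_range hv.span_eq_top fun i => by
    simp only [toLin'_apply, hM, hv.sum_vecMulVec_mulVec]

lemma ONFamily.apply_self_eq_sum {v : n → n → ℂ} (hv : ONFamily v) {M : Matrix n n ℂ}
    {c : n → ℝ} (hM : ∀ i, M *ᵥ v i = (c i : ℂ) • v i) (k : n) :
    M k k = ((∑ i, c i * ‖v i k‖ ^ 2 : ℝ) : ℂ) := by
  rw [hv.eq_sum_vecMulVec hM, sum_vecMulVec_apply_self]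

lemma Matrix.IsHermitian.exists_onFamily_mulVec_eq {A : Matrix n n ℂ} (hA : A.IsHermitian) :
    ∃ (w : n → n → ℂ) (t : n → ℝ), ONFamily w ∧ ∀ j, A *ᵥ w j = (t j : ℂ) • w j := by
  refine ⟨fun j => hA.eigenvectorBasis j, hA.eigenvalues, fun i j => ?_, fun j => ?_⟩
  · simpa [EuclideanSpace.inner_eq_star_dotProduct, dotProduct_comm] using
      orthonormal_iff_ite.mp hA.eigenvectorBasis.orthonormal i j
  · simpa [Complex.real_smul] using hA.mulVec_eigenvectorBasis j

end Spectral

section Companion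

variable {n : Type*} [Fintype n] {P Q : Matrix n n ℂ}

/-- If `(P - Q) w = t w` with `t ≥ 0`, then `Q w` is orthogonal to `P w = t w + Q w`; as
`⟪Q w, w⟫ ≥ 0`, this forces `Q w = 0`. -/
lemma Matrix.PosSemidef.mulVec_eq_zero_of_sub_mulVec_eq (hQ : Q.PosSemidef) (hQP : Q * P = 0)
    {w : n → ℂ} {t : ℝ} (ht : 0 ≤ t) (hw : (P - Q) *ᵥ w = (t : ℂ) • w) : Q *ᵥ w = 0 := by
  have hadj : ∀ y, star (Q *ᵥ w) ⬝ᵥ y = star w ⬝ᵥ (Q *ᵥ y) := fun y => by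
    rw [star_mulVec, hQ.1.eq, dotProduct_mulVec]
  have horth : star (Q *ᵥ w) ⬝ᵥ (P *ᵥ w) = 0 := by
    rw [hadj, mulVec_mulVec, hQP, zero_mulVec, dotProduct_zero]
  have hPw : P *ᵥ w = (t : ℂ) • w + Q *ᵥ w := by
    rw [← hw, sub_mulVec, sub_add_cancel]
  rw [hPw, dotProduct_add, dotProduct_smul, hadj, smul_eq_mul] at horth
  have hnonneg : 0 ≤ (t : ℂ) * (star w ⬝ᵥ (Q *ᵥ w)) :=
    mul_nonneg (Complex.zero_le_real.mpr ht) (hQ.dotProduct_mulVec_nonneg w)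
  exact dotProduct_star_self_eq_zero.mp
    ((add_eq_zero_iff_of_nonneg hnonneg (dotProduct_star_self_nonneg _)).mp horth).2

lemma Matrix.PosSemidef.mulVec_eq_of_sub_mulVec_eq (hP : P.PosSemidef) (hQ : Q.PosSemidef)
    (hPQ : P * Q = 0) {w : n → ℂ} {t : ℝ} (hw : (P - Q) *ᵥ w = (t : ℂ) • w) :
    P *ᵥ w = ((max t 0 : ℝ) : ℂ) • w ∧ Q *ᵥ w = ((max (-t) 0 : ℝ) : ℂ) • w := by
  have hQP : Q * P = 0 := by
    simpa [hP.1.eq, hQ.1.eq] using congrArg (·ᴴ) hPQ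
  rcases le_total 0 t with ht | ht
  · have hQw := hQ.mulVec_eq_zero_of_sub_mulVec_eq hQP ht hw
    rw [sub_mulVec, hQw, sub_zero] at hw
    simp [hw, hQw, ht]
  · have hw' : (Q - P) *ᵥ w = ((-t : ℝ) : ℂ) • w := by
      rw [← neg_sub, neg_mulVec, hw, Complex.ofReal_neg, neg_smul]
    have hPw := hP.mulVec_eq_zero_of_sub_mulVec_eq hPQ (neg_nonneg.mpr ht) hw'
    rw [sub_mulVec, hPw, sub_zero] at hw'
    simp [hw', hPw, ht]

variable [DecidableEq n]

theorem exists_onFamily_of_companion {a : n → ℝ} (ha : ∀ i, 0 ≤ a i) {u : n → n → ℂ}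
    (hu : ONFamily u) (hP : P = ∑ i, (a i : ℂ) • vecMulVec (u i) (star (u i)))
    (hQ : Q.PosSemidef) (hPQ : P * Q = 0) (hdiag : ∀ i, P i i = Q i i) :
    ∃ v : n → n → ℂ, ONFamily v ∧ (∀ i, P *ᵥ v i = (a i : ℂ) • v i) ∧
      ∃ x : n → ℝ, (∀ j, 0 ≤ x j) ∧ (∀ j, a j ≠ 0 → x j = 0) ∧
        ∀ k, ∑ i, a i * ‖v i k‖ ^ 2 = ∑ j, x j * ‖v j k‖ ^ 2 := by
  have hPpsd : P.PosSemidef := hP ▸ posSemidef_sum_vecMulVec u ha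
  have hPu : ∀ i, P *ᵥ u i = (a i : ℂ) • u i := fun i => hP ▸ hu.sum_vecMulVec_mulVec _ i
  obtain ⟨w, t, hw, hwt⟩ := (hPpsd.1.sub hQ.1).exists_onFamily_mulVec_eq
  have hPw j := (hPpsd.mulVec_eq_of_sub_mulVec_eq hQ hPQ (hwt j)).1
  have hQw j := (hPpsd.mulVec_eq_of_sub_mulVec_eq hQ hPQ (hwt j)).2
  -- both decompositions of `P` have `rank P` nonzero coefficients
  have hcard : Fintype.card {i // a i ≠ 0} = Fintype.card {j // 0 < t j} := calc
    _ = Fintype.card {i // (a i : ℂ) ≠ 0} :=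
      Fintype.card_congr (Equiv.subtypeEquivRight fun i => Complex.ofReal_ne_zero.symm)
    _ = P.rank := by rw [hP, hu.rank_sum_vecMulVec]
    _ = Fintype.card {j // ((max (t j) 0 : ℝ) : ℂ) ≠ 0} := by
      rw [hw.eq_sum_vecMulVec hPw, hw.rank_sum_vecMulVec]
    _ = Fintype.card {j // 0 < t j} :=
      Fintype.card_congr (Equiv.subtypeEquivRight fun j => by simp)
  obtain ⟨τ, hτ⟩ := Equiv.Perm.exists_forall_iff_of_card_eq hcard
  have hPwτ : ∀ i, a i = 0 → P *ᵥ w (τ i) = 0 := fun i hi => by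
    simp [hPw, not_lt.mp ((hτ i).not.mp (not_not.mpr hi))]
  set v : n → n → ℂ := fun i => if a i ≠ 0 then u i else (w ∘ τ) i with hv_def
  have hv : ONFamily v := hu.ite (hw.comp τ.injective) _ fun i j hi hj =>
    hPpsd.1.star_dotProduct_eq_zero hi (hPu i) (hPwτ j (not_not.mp hj))
  have hPv : ∀ i, P *ᵥ v i = (a i : ℂ) • v i := fun i => by
    by_cases hi : a i = 0 <;> simp [hv_def, hi, hPu, hPwτ]
  refine ⟨v, hv, hPv, fun j => max (-t (τ j)) 0, fun j => le_max_right _ _,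
    fun j hj => max_eq_right (by linarith [(hτ j).mp hj]), fun k => ?_⟩
  have hQk : P k k = ((∑ j, max (-t j) 0 * ‖w j k‖ ^ 2 : ℝ) : ℂ) :=
    (hdiag k).trans (hw.apply_self_eq_sum hQw k)
  rw [hv.apply_self_eq_sum hPv k, Complex.ofReal_inj] at hQk
  rw [hQk, ← Equiv.sum_comp τ]
  refine Finset.sum_congr rfl fun j _ => ?_
  by_cases hj : a j = 0
  · simp [hv_def, hj]
  · simp [hv_def, hj, max_eq_right (by linarith [(hτ j).mp hj] : -t (τ j) ≤ 0)]

theorem exists_companion_of_onFamily {a : n → ℝ} {v : n → n → ℂ} (hv : ONFamily v)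
    (hPv : ∀ i, P *ᵥ v i = (a i : ℂ) • v i) {x : n → ℝ} (hx : ∀ j, 0 ≤ x j)
    (hxa : ∀ j, x j * a j = 0) (hdiag : ∀ k, ∑ i, a i * ‖v i k‖ ^ 2 = ∑ j, x j * ‖v j k‖ ^ 2) :
    ∃ Q : Matrix n n ℂ, Q.PosSemidef ∧ P * Q = 0 ∧ ∀ i, P i i = Q i i := by
  refine ⟨∑ j, (x j : ℂ) • vecMulVec (v j) (star (v j)), posSemidef_sum_vecMulVec v hx, ?_,
    fun k => ?_⟩
  · simp [Finset.mul_sum, mul_vecMulVec, hPv, smul_smul, hxa]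
  · rw [hv.apply_self_eq_sum hPv, sum_vecMulVec_apply_self, hdiag]

end Companion

theorem stmt11_general (n r : ℕ)
    (P : Matrix (Fin n) (Fin n) ℂ) (a : Fin n → ℝ)
    (hapos : ∀ i : Fin n, (i : ℕ) < r → 0 < a i)
    (ha0 : ∀ i : Fin n, r ≤ (i : ℕ) → a i = 0)
    (u : Fin n → (Fin n → ℂ)) (hu : ONFamily u)
    (hP : P = ∑ i, (a i : ℂ) • Matrix.vecMulVec (u i) (star (u i))) :
    (∃ Q : Matrix (Fin n) (Fin n) ℂ, Q.PosSemidef ∧ P * Q = 0 ∧ ∀ i, P i i = Q i i) ↔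
    (∃ v : Fin n → (Fin n → ℂ), ONFamily v ∧
      (∀ i, P.mulVec (v i) = (a i : ℂ) • v i) ∧
      (fun k => ∑ i, a i * ‖v i k‖ ^ 2) ∈
        {y : Fin n → ℝ | ∃ x : Fin n → ℝ, (∀ j, 0 ≤ x j) ∧
          (∀ j : Fin n, (j : ℕ) < r → x j = 0) ∧
          y = fun k => ∑ j, x j * ‖v j k‖ ^ 2}) := by
  have ha_ne : ∀ i : Fin n, a i ≠ 0 ↔ (i : ℕ) < r := fun i => by
    by_cases hi : (i : ℕ) < r
    · simp [hi, (hapos i hi).ne']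
    · simp [hi, ha0 i (not_lt.mp hi)]
  have ha : ∀ i, 0 ≤ a i := fun i =>
    (lt_or_ge (i : ℕ) r).elim (fun hi => (hapos i hi).le) (fun hi => (ha0 i hi).ge)
  constructor
  · rintro ⟨Q, hQ, hPQ, hdiag⟩
    obtain ⟨v, hv, hPv, x, hx, hxa, hdiagv⟩ := exists_onFamily_of_companion ha hu hP hQ hPQ hdiag
    exact ⟨v, hv, hPv, x, hx, fun j hj => hxa j ((ha_ne j).mpr hj), funext hdiagv⟩
  · rintro ⟨v, hv, hPv, x, hx, hx0, hxv⟩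
    refine exists_companion_of_onFamily hv hPv hx (fun j => ?_) (congrFun hxv)
    by_cases hj : a j = 0
    · simp [hj]
    · simp [hx0 j ((ha_ne j).mp hj)]

theorem stmt11 (n r : ℕ) (hr : 0 < r) (hrn : r < n)
    (P : Matrix (Fin n) (Fin n) ℂ) (a : Fin n → ℝ)
    (hapos : ∀ i : Fin n, (i : ℕ) < r → 0 < a i)
    (ha0 : ∀ i : Fin n, r ≤ (i : ℕ) → a i = 0)
    (u : Fin n → (Fin n → ℂ)) (hu : ONFamily u)
    (hP : P = ∑ i, (a i : ℂ) • Matrix.vecMulVec (u i) (star (u i))) :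
    (∃ Q : Matrix (Fin n) (Fin n) ℂ, Q.PosSemidef ∧ P * Q = 0 ∧ ∀ i, P i i = Q i i) ↔
    (∃ v : Fin n → (Fin n → ℂ), ONFamily v ∧
      (∀ i, P.mulVec (v i) = (a i : ℂ) • v i) ∧
      (fun k => ∑ i, a i * ‖v i k‖ ^ 2) ∈
        {y : Fin n → ℝ | ∃ x : Fin n → ℝ, (∀ j, 0 ≤ x j) ∧
          (∀ j : Fin n, (j : ℕ) < r → x j = 0) ∧
          y = fun k => ∑ j, x j * ‖v j k‖ ^ 2}) :=
  stmt11_general n r P a hapos ha0 u hu hP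
end
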